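/- Let n ≥ 2, let P be a random vector in the probability simplex Δ^{n−1} ⊂ ℝ^n and Y a random index in {1,…,n} with E[P_Y] = σ. Then E[‖P − e_Y‖²] ≥ (n/(n−1))·(1 − σ)². -/

import Mathlib

/-!
Splitting off the coordinate `y`, `‖p - e_y‖² = (1 - p_y)² + ∑_{j ≠ y} p_j²`, and since the
`n - 1` remaining coordinates sum to `1 - p_y`, Cauchy–Schwarz bounds the second term below by
`(1 - p_y)² / (n - 1)`. This gives `‖p - e_y‖² ≥ n/(n-1) · (1 - p_y)²` pointwise, and Jensen's
inequality `E[X²] ≥ E[X]²` for `X = 1 - P_Y` finishes the proof.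
-/

open MeasureTheory Finset

section Simplex

variable {ι : Type*} [Fintype ι] [DecidableEq ι]

lemma sum_sq_sub_indicator_eq (p : ι → ℝ) (y : ι) :
    ∑ j, (p j - if j = y then 1 else 0) ^ 2 = (1 - p y) ^ 2 + ∑ j ∈ univ.erase y, p j ^ 2 := by
  rw [← add_sum_erase _ _ (mem_univ y), if_pos rfl, sub_sq_comm]
  congr 1
  refine sum_congr rfl fun j hj => ?_
  rw [if_neg (ne_of_mem_erase hj), sub_zero]

lemma sq_one_sub_le_card_sub_one_mul_sum_sq_erase (p : ι → ℝ) (hp : ∑ i, p i = 1) (y : ι) :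
    (1 - p y) ^ 2 ≤ ((Fintype.card ι : ℝ) - 1) * ∑ j ∈ univ.erase y, p j ^ 2 := by
  have hsum_erase : ∑ j ∈ univ.erase y, p j = 1 - p y := by
    rw [← hp, ← add_sum_erase _ _ (mem_univ y), add_sub_cancel_left]
  have hcard : ((univ.erase y).card : ℝ) = (Fintype.card ι : ℝ) - 1 := by
    rw [card_erase_of_mem (mem_univ y), card_univ,
      Nat.cast_sub (Fintype.card_pos_iff.mpr ⟨y⟩), Nat.cast_one]
  simpa only [hsum_erase, hcard] using sq_sum_le_card_mul_sum_sq (s := univ.erase y) (f := p)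

lemma card_div_card_sub_one_mul_sq_le_sum_sq_sub_indicator (hι : 1 < Fintype.card ι)
    (p : ι → ℝ) (hp : ∑ i, p i = 1) (y : ι) :
    ((Fintype.card ι : ℝ) / ((Fintype.card ι : ℝ) - 1)) * (1 - p y) ^ 2
      ≤ ∑ j, (p j - if j = y then 1 else 0) ^ 2 := by
  have hpos : (0 : ℝ) < (Fintype.card ι : ℝ) - 1 := by
    rw [sub_pos, Nat.one_lt_cast]; exact hι
  have hrest : (1 - p y) ^ 2 / ((Fintype.card ι : ℝ) - 1) ≤ ∑ j ∈ univ.erase y, p j ^ 2 := by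
    rw [div_le_iff₀ hpos, mul_comm]
    exact sq_one_sub_le_card_sub_one_mul_sum_sq_erase p hp y
  have hsplit : ((Fintype.card ι : ℝ) / ((Fintype.card ι : ℝ) - 1)) * (1 - p y) ^ 2
      = (1 - p y) ^ 2 + (1 - p y) ^ 2 / ((Fintype.card ι : ℝ) - 1) := by
    field_simp; ring
  rw [hsplit, sum_sq_sub_indicator_eq]
  gcongr

end Simplex

lemma mul_sq_integral_le_of_ae_mul_sq_le {Ω : Type*} [MeasurableSpace Ω] {μ : Measure Ω}
    [IsProbabilityMeasure μ] {X f : Ω → ℝ} {c : ℝ} (hc : 0 < c) (hX : Integrable X μ)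
    (hf : Integrable f μ) (hle : ∀ᵐ ω ∂μ, c * X ω ^ 2 ≤ f ω) :
    c * (∫ ω, X ω ∂μ) ^ 2 ≤ ∫ ω, f ω ∂μ := by
  have hX2 : Integrable (fun ω => X ω ^ 2) μ := by
    refine (hf.div_const c).mono' (hX.aestronglyMeasurable.pow 2) ?_
    filter_upwards [hle] with ω hω
    rw [Real.norm_eq_abs, abs_of_nonneg (sq_nonneg _), le_div_iff₀ hc, mul_comm]
    exact hω
  have hjensen : (∫ ω, X ω ∂μ) ^ 2 ≤ ∫ ω, X ω ^ 2 ∂μ :=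
    (Even.convexOn_pow even_two).map_integral_le (continuous_pow 2).continuousOn isClosed_univ
      (.of_forall fun _ => Set.mem_univ _) hX hX2
  calc c * (∫ ω, X ω ∂μ) ^ 2 ≤ c * ∫ ω, X ω ^ 2 ∂μ := by gcongr
    _ = ∫ ω, c * X ω ^ 2 ∂μ := (integral_const_mul _ _).symm
    _ ≤ ∫ ω, f ω ∂μ := integral_mono_ae (hX2.const_mul c) hf hle

theorem ce_grad_norm_lower_general {Ω : Type*} [MeasurableSpace Ω] (μ : Measure Ω)
    [IsProbabilityMeasure μ] (n : ℕ) (hn : 2 ≤ n) (σ : ℝ)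
    (P : Ω → Fin n → ℝ) (Y : Ω → Fin n)
    (hsum : ∀ ω, ∑ i, P ω i = 1)
    (hiPY : Integrable (fun ω => P ω (Y ω)) μ)
    (hi : Integrable (fun ω => ∑ j, (P ω j - if j = Y ω then 1 else 0) ^ 2) μ)
    (hPY : ∫ ω, P ω (Y ω) ∂μ = σ) :
    ((n : ℝ) / ((n : ℝ) - 1)) * (1 - σ) ^ 2
      ≤ ∫ ω, ∑ j, (P ω j - if j = Y ω then 1 else 0) ^ 2 ∂μ := by
  have hcard : 1 < Fintype.card (Fin n) := by rw [Fintype.card_fin]; omega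
  have hpointwise := fun ω =>
    card_div_card_sub_one_mul_sq_le_sum_sq_sub_indicator hcard (P ω) (hsum ω) (Y ω)
  simp only [Fintype.card_fin] at hpointwise
  have hc : 0 < (n : ℝ) / ((n : ℝ) - 1) := by
    have : (2 : ℝ) ≤ n := by exact_mod_cast hn
    apply div_pos <;> linarith
  have hmean : ∫ ω, (1 - P ω (Y ω)) ∂μ = 1 - σ := by
    rw [integral_sub (integrable_const 1) hiPY, hPY, integral_const, probReal_univ, one_smul]
  rw [← hmean]
  exact mul_sq_integral_le_of_ae_mul_sq_le hc ((integrable_const 1).sub hiPY) hi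
    (.of_forall hpointwise)

/-- For n ≥ 2, a random vector P in the probability simplex and random
index Y with E[P_Y] = σ, we have E[‖P − e_Y‖²] ≥ (n/(n−1))(1 − σ)². -/
theorem ce_grad_norm_lower {Ω : Type*} [MeasurableSpace Ω] (μ : Measure Ω)
    [IsProbabilityMeasure μ] (n : ℕ) (hn : 2 ≤ n) (σ : ℝ)
    (P : Ω → Fin n → ℝ) (Y : Ω → Fin n)
    (hnonneg : ∀ ω i, 0 ≤ P ω i) (hsum : ∀ ω, ∑ i, P ω i = 1)
    (hiPY : Integrable (fun ω => P ω (Y ω)) μ)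
    (hi : Integrable (fun ω => ∑ j, (P ω j - if j = Y ω then 1 else 0) ^ 2) μ)
    (hPY : ∫ ω, P ω (Y ω) ∂μ = σ) :
    ((n : ℝ) / ((n : ℝ) - 1)) * (1 - σ) ^ 2
      ≤ ∫ ω, ∑ j, (P ω j - if j = Y ω then 1 else 0) ^ 2 ∂μ :=
  ce_grad_norm_lower_general μ n hn σ P Y hsum hiPY hi hPY
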